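/- arXiv:1508.03500 — 7 statements merged into one kernel-verified Lean document; each statement's English description precedes it below -/
import Mathlib

section
/- Let G be a finite abelian group with |G| ≥ 3. Then for every k ∈ ℕ, ρ_{2k}(G) = k·D(G), where D(G) is the Davenport constant of G. -/
open scoped Pointwise

section Defs

variable (G : Type*) [AddCommGroup G]

/-- `S` is a minimal zero-sum sequence (an atom of the monoid `B(G)` of zero-sum
sequences): it is nonempty, has sum zero, and no proper nonempty subsequence has sum zero. -/
def IsMinZS (S : Multiset G) : Prop :=
  S ≠ 0 ∧ S.sum = 0 ∧ ∀ T : Multiset G, T ≤ S → T ≠ 0 → T ≠ S → T.sum ≠ 0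

/-- `S` is a product of `k` atoms of `B(G)`. -/
def IsProdOfAtoms (k : ℕ) (S : Multiset G) : Prop :=
  ∃ L : Multiset (Multiset G), Multiset.card L = k ∧ (∀ U ∈ L, IsMinZS G U) ∧ L.sum = S

/-- `S` is a product of atoms of length `2`. -/
def IsProd2Atoms (S : Multiset G) : Prop :=
  ∃ L : Multiset (Multiset G), (∀ U ∈ L, IsMinZS G U ∧ Multiset.card U = 2) ∧ L.sum = S

/-- The set of lengths of `A` in `B(G)`. -/
def LSet (A : Multiset G) : Set ℕ := { k | IsProdOfAtoms G k A }

/-- `U_k(G)`: the set of `m` such that some product of `k` atoms equals a product of `m` atoms. -/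
def UkSet (k : ℕ) : Set ℕ :=
  { m | ∃ S : Multiset G, IsProdOfAtoms G k S ∧ IsProdOfAtoms G m S }

/-- `ρ_k(G) = sup U_k(G)`. -/
noncomputable def rho (k : ℕ) : ℕ := sSup (UkSet G k)

/-- The Davenport constant `D(G)`: the maximal length of a minimal zero-sum sequence. -/
noncomputable def Dav : ℕ :=
  sSup { n : ℕ | ∃ S : Multiset G, IsMinZS G S ∧ Multiset.card S = n }

/-- `A` is pair-nice with factorization into `2k` atoms of length `d` (where `d` plays
the role of `D^*(G)`). -/
def PairNiceWith (d k : ℕ) (A : Multiset G) : Prop :=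
  1 ≤ k ∧ ∃ (U : Fin (2 * k) → Multiset G) (g : Fin (2 * k) → G),
    (∀ i, IsMinZS G (U i) ∧ Multiset.card (U i) = d) ∧
    (∑ i, U i) = A ∧ (∀ i, g i ∈ U i) ∧
    IsProd2Atoms G (∑ i, ({g i} : Multiset G))

/-- `A` is pair-nice (with respect to `G`, with `d = D^*(G)`). -/
def PairNice (d : ℕ) (A : Multiset G) : Prop := ∃ k, PairNiceWith G d k A

/-- `A` is nice with factorization into `2k+1` atoms of length `d` (where `d` plays the
role of `D^*(G)`), as in Definition 3.1 of the paper. -/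
def NiceWith [DecidableEq G] (d k : ℕ) (A : Multiset G) : Prop :=
  1 ≤ k ∧ ∃ (U : Fin (2 * k + 1) → Multiset G) (g : Fin (2 * k + 1) → G),
    (∀ i, IsMinZS G (U i) ∧ Multiset.card (U i) = d) ∧
    (∑ i, U i) = A ∧ (∀ i, g i ∈ U i) ∧
    ((Odd d ∧ IsProd2Atoms G (A - ∑ i, ({g i} : Multiset G)) ∧
        ∃ W : Fin k → Multiset G, (∀ j, IsMinZS G (W j)) ∧
          (∀ j : Fin k, Multiset.card (W j) = if (j : ℕ) = 0 then 3 else 2) ∧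
          (∑ j, W j) = ∑ i, ({g i} : Multiset G)) ∨
      (Even d ∧ ∃ h : G, h ∈ A - ∑ i, ({g i} : Multiset G) ∧
        IsProd2Atoms G (A - ((∑ i, ({g i} : Multiset G)) + {h})) ∧
        IsProd2Atoms G ((∑ i, ({g i} : Multiset G)) + {h})))

/-- `A` is nice (with respect to `G`, with `d = D^*(G)`). -/
def Nice [DecidableEq G] (d : ℕ) (A : Multiset G) : Prop := ∃ k, NiceWith G d k A

end Defs

section MonoidDefs

variable (H : Type*) [CommMonoid H]

/-- `U_k(H)` for a monoid `H`: the set of `m` such that some product of `k` irreducible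
elements (atoms) of `H` equals a product of `m` atoms. -/
def UkM (k : ℕ) : Set ℕ :=
  { m | ∃ L L' : Multiset H, Multiset.card L = k ∧ Multiset.card L' = m ∧
      (∀ u ∈ L, Irreducible u) ∧ (∀ v ∈ L', Irreducible v) ∧ L.prod = L'.prod }

/-- `ρ_k(H) = sup U_k(H)`. -/
noncomputable def rhoM (k : ℕ) : ℕ := sSup (UkM H k)

end MonoidDefs

section Aux

variable {G : Type*} [AddCommGroup G]

lemma atom_eq_zero_singleton {S : Multiset G} (h : IsMinZS G S) (h0 : (0:G) ∈ S) :
    S = {0} := by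
  obtain ⟨hne, hsum, hmin⟩ := h
  by_contra hS
  exact hmin {0} (Multiset.singleton_le.mpr h0) (by simp) (fun e => hS e.symm) (by simp)

lemma atom_zero : IsMinZS G ({0} : Multiset G) := by
  refine ⟨by simp, by simp, ?_⟩
  intro T hT hT0 hTS
  rcases Multiset.le_singleton.mp hT with h | h
  · exact absurd h hT0
  · exact absurd h hTS

lemma atom_two_le_card {S : Multiset G} (h : IsMinZS G S) (hS : S ≠ {0}) :
    2 ≤ Multiset.card S := by
  obtain ⟨hne, hsum, _⟩ := h
  by_contra hc
  have h1 : Multiset.card S = 1 := by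
    have : Multiset.card S ≠ 0 := by simpa using hne
    omega
  obtain ⟨a, ha⟩ := Multiset.card_eq_one.mp h1
  apply hS
  rw [ha] at hsum ⊢
  simp at hsum
  rw [hsum]

lemma pair_atom {g : G} (hg : g ≠ 0) : IsMinZS G ({g, -g} : Multiset G) := by
  refine ⟨by simp, by simp, ?_⟩
  intro T hT hT0 hTS
  have hc2 : Multiset.card ({g, -g} : Multiset G) = 2 := by
    simp [Multiset.insert_eq_cons]
  have hcard : Multiset.card T < 2 := by
    rcases Nat.lt_or_ge (Multiset.card T) 2 with h | h
    · exact h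
    · exact absurd (Multiset.eq_of_le_of_card_le hT (hc2 ▸ h)) hTS
  have hc1 : Multiset.card T = 1 := by
    have : Multiset.card T ≠ 0 := by simpa using hT0
    omega
  obtain ⟨a, ha⟩ := Multiset.card_eq_one.mp hc1
  subst ha
  have haM : a ∈ ({g, -g} : Multiset G) := Multiset.mem_of_le hT (by simp)
  simp only [Multiset.insert_eq_cons, Multiset.mem_cons, Multiset.mem_singleton] at haM
  rcases haM with rfl | rfl
  · simpa using hg
  · simpa using hg

lemma atom_neg {S : Multiset G} (h : IsMinZS G S) :
    IsMinZS G (S.map (fun x => -x)) := by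
  obtain ⟨hne, hsum, hmin⟩ := h
  refine ⟨by simpa using hne, by
    have := Multiset.sum_map_neg' S
    simpa [hsum] using this, ?_⟩
  intro T hT hT0 hTS
  have hTT : (T.map (fun x => -x)).map (fun x => -x) = T := by
    rw [Multiset.map_map]; simp
  have h1 : T.map (fun x => -x) ≤ S := by
    have := Multiset.map_le_map (f := fun x : G => -x) hT
    rw [Multiset.map_map] at this
    simpa using this
  have h2 : T.map (fun x => -x) ≠ 0 := by simpa using hT0
  have h3 : T.map (fun x => -x) ≠ S := by
    intro e
    apply hTS
    rw [← e]
    exact hTT.symm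
  have h4 := hmin _ h1 h2 h3
  have h5 : (T.map (fun x => -x)).sum = -T.sum := Multiset.sum_map_neg' T
  intro hT'
  apply h4
  rw [h5, hT', neg_zero]

lemma atom_card_le [Fintype G] {S : Multiset G} (h : IsMinZS G S) :
    Multiset.card S ≤ Fintype.card G := by
  obtain ⟨hne, hsum, hmin⟩ := h
  set l := S.toList with hldef
  have hlS : (l : Multiset G) = S := Multiset.coe_toList S
  have hlen : l.length = Multiset.card S := Multiset.length_toList S
  rw [← hlen]
  have key : ∀ i j : Fin l.length, (i : ℕ) < j →
      (l.take (i + 1)).sum ≠ (l.take (j + 1)).sum := by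
    intro i j hij heq
    set seg : List G := (l.drop ((i : ℕ) + 1)).take ((j : ℕ) - i) with hseg
    have hsplit : l.take ((j : ℕ) + 1) = l.take ((i : ℕ) + 1) ++ seg := by
      rw [hseg, ← List.take_add]
      congr 1
      omega
    have hsum0 : (seg : Multiset G).sum = 0 := by
      rw [hsplit, List.sum_append] at heq
      rw [Multiset.sum_coe]
      have : (l.take ((i:ℕ)+1)).sum + 0 = (l.take ((i:ℕ)+1)).sum + seg.sum := by
        rw [add_zero]; exact heq
      exact (add_left_cancel this).symm
    have hseglen : seg.length = (j : ℕ) - i := by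
      rw [hseg, List.length_take, List.length_drop]
      have := j.isLt
      omega
    refine hmin (seg : Multiset G) ?_ ?_ ?_ hsum0
    · rw [← hlS]
      exact Multiset.coe_le.mpr
        ((List.take_sublist _ _).trans (List.drop_sublist _ _)).subperm
    · rw [Ne, Multiset.coe_eq_zero, ← List.length_eq_zero_iff]
      omega
    · intro e
      have : Multiset.card (seg : Multiset G) = Multiset.card S := by rw [e]
      rw [Multiset.coe_card, hseglen, ← hlen] at this
      have := j.isLt
      omega
  have hinj : Function.Injective (fun i : Fin l.length => (l.take ((i : ℕ) + 1)).sum) := by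
    intro i j hij
    rcases lt_trichotomy (i : ℕ) (j : ℕ) with h | h | h
    · exact absurd hij (key i j h)
    · exact Fin.ext h
    · exact absurd hij.symm (key j i h)
  simpa using Fintype.card_le_of_injective _ hinj

lemma dav_bddAbove [Fintype G] :
    BddAbove {n : ℕ | ∃ S : Multiset G, IsMinZS G S ∧ Multiset.card S = n} := by
  refine ⟨Fintype.card G, ?_⟩
  rintro n ⟨S, hS, rfl⟩
  exact atom_card_le hS

lemma card_le_dav [Fintype G] {S : Multiset G} (h : IsMinZS G S) :
    Multiset.card S ≤ Dav G :=
  le_csSup dav_bddAbove ⟨S, h, rfl⟩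

lemma two_le_dav [Fintype G] (hG : 3 ≤ Fintype.card G) : 2 ≤ Dav G := by
  have : Nontrivial G := Fintype.one_lt_card_iff_nontrivial.mp (by omega)
  obtain ⟨g, hg⟩ := exists_ne (0 : G)
  refine le_csSup dav_bddAbove ⟨({g, -g} : Multiset G), pair_atom hg, ?_⟩
  simp [Multiset.insert_eq_cons]

lemma exists_max_atom [Fintype G] :
    ∃ S : Multiset G, IsMinZS G S ∧ Multiset.card S = Dav G := by
  have hne : {n : ℕ | ∃ S : Multiset G, IsMinZS G S ∧ Multiset.card S = n}.Nonempty :=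
    ⟨1, ⟨({0} : Multiset G), atom_zero, by simp⟩⟩
  exact Nat.sSup_mem hne dav_bddAbove

lemma atom_low [DecidableEq G] {U : Multiset G} (h : IsMinZS G U) :
    2 ≤ Multiset.card U + Multiset.count 0 U := by
  by_cases h0 : (0 : G) ∈ U
  · rw [atom_eq_zero_singleton h h0]; simp
  · have : U ≠ {0} := fun e => h0 (e ▸ by simp)
    have := atom_two_le_card h this
    omega

lemma atom_high [Fintype G] [DecidableEq G] (hG : 3 ≤ Fintype.card G)
    {U : Multiset G} (h : IsMinZS G U) :
    Multiset.card U + Multiset.count 0 U ≤ Dav G := by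
  by_cases h0 : (0 : G) ∈ U
  · rw [atom_eq_zero_singleton h h0]
    simpa using two_le_dav hG
  · rw [Multiset.count_eq_zero.mpr h0, add_zero]
    exact card_le_dav h

lemma sum_low [DecidableEq G] (L : Multiset (Multiset G))
    (hL : ∀ U ∈ L, IsMinZS G U) :
    2 * Multiset.card L ≤ Multiset.card L.sum + Multiset.count 0 L.sum := by
  induction L using Multiset.induction_on with
  | empty => simp
  | cons U L ih =>
    have h1 := atom_low (hL U (Multiset.mem_cons_self U L))
    have h2 := ih (fun V hV => hL V (Multiset.mem_cons_of_mem hV))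
    rw [Multiset.sum_cons, Multiset.card_add, Multiset.count_add, Multiset.card_cons]
    omega

lemma sum_high [Fintype G] [DecidableEq G] (hG : 3 ≤ Fintype.card G)
    (L : Multiset (Multiset G)) (hL : ∀ U ∈ L, IsMinZS G U) :
    Multiset.card L.sum + Multiset.count 0 L.sum ≤ Multiset.card L * Dav G := by
  induction L using Multiset.induction_on with
  | empty => simp
  | cons U L ih =>
    have h1 := atom_high hG (hL U (Multiset.mem_cons_self U L))
    have h2 := ih (fun V hV => hL V (Multiset.mem_cons_of_mem hV))
    rw [Multiset.sum_cons, Multiset.card_add, Multiset.count_add, Multiset.card_cons,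
      add_mul, one_mul]
    omega

lemma uk_ub [Fintype G] (hG : 3 ≤ Fintype.card G) {k m : ℕ}
    (hm : m ∈ UkSet G (2 * k)) : m ≤ k * Dav G := by
  classical
  obtain ⟨A, ⟨L, hLc, hLa, hLs⟩, ⟨L', hL'c, hL'a, hL's⟩⟩ := hm
  have h1 := sum_low L' hL'a
  have h2 := sum_high hG L hLa
  rw [hL's, hL'c] at h1
  rw [hLs, hLc] at h2
  have h3 : 2 * m ≤ 2 * (k * Dav G) := by
    calc 2 * m ≤ Multiset.card A + Multiset.count 0 A := h1
    _ ≤ 2 * k * Dav G := h2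
    _ = 2 * (k * Dav G) := by ring
  omega

lemma sum_pairs (U : Multiset G) :
    (U.map (fun g => ({g, -g} : Multiset G))).sum = U + U.map (fun x => -x) := by
  induction U using Multiset.induction_on with
  | empty => simp
  | cons a s ih =>
    rw [Multiset.map_cons, Multiset.sum_cons, ih, Multiset.map_cons]
    rw [Multiset.insert_eq_cons, Multiset.cons_add, Multiset.cons_add,
      Multiset.singleton_add, Multiset.add_cons]

lemma nsmul_sum' {α : Type*} [AddCommMonoid α] (n : ℕ) (s : Multiset α) :
    (n • s).sum = n • s.sum := by
  induction n with
  | zero => simp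
  | succ n ih => rw [succ_nsmul, succ_nsmul, Multiset.sum_add, ih]

lemma uk_lb [Fintype G] (hG : 3 ≤ Fintype.card G) {k : ℕ} (hk : 1 ≤ k) :
    k * Dav G ∈ UkSet G (2 * k) := by
  classical
  obtain ⟨U, hU, hUc⟩ := exists_max_atom (G := G)
  have hD2 := two_le_dav (G := G) hG
  have hU0 : (0 : G) ∉ U := by
    intro h0
    have := atom_eq_zero_singleton hU h0
    rw [this] at hUc
    simp at hUc
    omega
  set V : Multiset G := U.map (fun x => -x) with hV
  refine ⟨k • (U + V), ⟨k • (U ::ₘ {V}), ?_, ?_, ?_⟩,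
    ⟨k • (U.map (fun g => ({g, -g} : Multiset G))), ?_, ?_, ?_⟩⟩
  · rw [Multiset.card_nsmul]
    simp [mul_comm]
  · intro W hW
    rw [Multiset.mem_nsmul] at hW
    rcases Multiset.mem_cons.mp hW.2 with h | h
    · rw [h]; exact hU
    · rw [Multiset.mem_singleton] at h
      rw [h, hV]; exact atom_neg hU
  · rw [nsmul_sum', Multiset.sum_cons, Multiset.sum_singleton]
  · rw [Multiset.card_nsmul, Multiset.card_map, hUc]
  · intro W hW
    rw [Multiset.mem_nsmul] at hW
    obtain ⟨g, hg, rfl⟩ := Multiset.mem_map.mp hW.2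
    exact pair_atom (fun e => hU0 (e ▸ hg))
  · rw [nsmul_sum', sum_pairs]

end Aux

/-- If `|G| ≥ 3` then `ρ_{2k}(G) = k · D(G)` for every `k ∈ ℕ`. -/
theorem stmt1 (G : Type*) [AddCommGroup G] [Fintype G] (hG : 3 ≤ Fintype.card G) :
    ∀ k : ℕ, 1 ≤ k → rho G (2 * k) = k * Dav G := by
  intro k hk
  have hmem := uk_lb hG hk
  have hub : ∀ m ∈ UkSet G (2 * k), m ≤ k * Dav G := fun m hm => uk_ub hG hm
  exact le_antisymm (csSup_le ⟨_, hmem⟩ hub) (le_csSup ⟨k * Dav G, hub⟩ hmem)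
end

section
/- Let G = C_n ⊕ C_{mn} with basis (e_1, e_2), ord(e_1) = n > 1, ord(e_2) = mn. For each i ∈ [0, n−1], the sequence U_i = e_1^{n−1} · ((−1)^{i+1}e_2 + (i+1)e_1) · ((−1)^{i+1}e_2 − i e_1) · ((−1)^{i+1}e_2)^{mn−2} is a minimal zero-sum sequence over G of length mn + n − 1 = D*(G). -/
open scoped Pointwise

/-! Write `f = (-1)^(i+1) • e₂`. Projecting to `C_{mn}` kills `e₁` and sends every other term of
`U` to the generator `±1`, while the two middle terms add up to `e₁ + 2 • f`. So a zero-sum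
subsequence with `x ≤ n - 1` copies of `e₁` contains either none of the other `mn` terms, and then
`x • e₁ = 0` forces it to be empty, or all of them, and then `(x + 1) • e₁ = 0` forces it to be
all of `U`. -/

theorem Multiset.exists_le_le_eq_add_of_le_add {α : Type*} [DecidableEq α] {T A B : Multiset α}
    (h : T ≤ A + B) : ∃ T₁ ≤ A, ∃ T₂ ≤ B, T = T₁ + T₂ := by
  refine ⟨T ∩ A, Multiset.inter_le_right, T - T ∩ A, ?_,
    (add_tsub_cancel_of_le Multiset.inter_le_left).symm⟩
  rw [Multiset.le_iff_count] at h ⊢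
  intro a
  have := h a
  simp only [Multiset.count_sub, Multiset.count_inter, Multiset.count_add] at this ⊢
  omega

section

variable {G H : Type*} [AddCommGroup G] [AddCommGroup H]

theorem isMinZS_replicate_add_pair_add_replicate (φ : G →+ H) {e a b f : G} {n N : ℕ}
    (hn : 0 < n) (hN : 2 ≤ N) (he : addOrderOf e = n) (hφf : addOrderOf (φ f) = N)
    (hNf : N • f = 0) (hφe : φ e = 0) (hφa : φ a = φ f) (hφb : φ b = φ f)
    (hab : a + b = e + 2 • f) :
    IsMinZS G (Multiset.replicate (n - 1) e + {a, b} + Multiset.replicate (N - 2) f) := by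
  classical
  have hpair : ({a, b} : Multiset G).sum = a + b := by simp [Multiset.insert_eq_cons]
  have sum_eq (x y : ℕ) : (Multiset.replicate x e + {a, b} + Multiset.replicate y f).sum
      = (x + 1) • e + (y + 2) • f := by
    simp only [Multiset.sum_add, Multiset.sum_replicate, hpair, hab]
    module
  refine ⟨by simp, ?_, ?_⟩
  · rw [sum_eq, Nat.sub_add_cancel hn, Nat.sub_add_cancel hN, ← he, addOrderOf_nsmul_eq_zero,
      hNf, add_zero]
  intro T hTU hT0 hTne hTsum
  obtain ⟨T₁₂, hT₁₂, T₃, hT₃, rfl⟩ := Multiset.exists_le_le_eq_add_of_le_add hTU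
  obtain ⟨T₁, hT₁, T₂, hT₂, rfl⟩ := Multiset.exists_le_le_eq_add_of_le_add hT₁₂
  obtain ⟨x, hx, rfl⟩ := Multiset.le_replicate_iff.1 hT₁
  obtain ⟨y, hy, rfl⟩ := Multiset.le_replicate_iff.1 hT₃
  have hT₂card : Multiset.card T₂ ≤ 2 := by simpa using Multiset.card_le_card hT₂
  have hφT₂ : φ T₂.sum = Multiset.card T₂ • φ f := by
    rw [map_multiset_sum, (Multiset.eq_replicate_card (s := T₂.map φ) (a := φ f)).2 ?_,
      Multiset.sum_replicate, Multiset.card_map]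
    simp only [Multiset.mem_map]
    rintro _ ⟨g, hg, rfl⟩
    have : g = a ∨ g = b := by simpa using Multiset.mem_of_le hT₂ hg
    rcases this with rfl | rfl <;> assumption
  have hN_dvd : N ∣ Multiset.card T₂ + y := by
    have := congrArg φ hTsum
    simp only [Multiset.sum_add, Multiset.sum_replicate, map_add, map_nsmul, hφe, hφT₂,
      smul_zero, zero_add, map_zero] at this
    rwa [← hφf, addOrderOf_dvd_iff_nsmul_eq_zero, add_nsmul]
  rcases Nat.eq_zero_or_pos (Multiset.card T₂ + y) with h0 | hpos
  · obtain rfl : T₂ = 0 := Multiset.card_eq_zero.1 (by omega)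
    obtain rfl : y = 0 := by omega
    have hxe : x • e = 0 := by simpa [Multiset.sum_replicate] using hTsum
    have : n ∣ x := he ▸ addOrderOf_dvd_of_nsmul_eq_zero hxe
    obtain rfl : x = 0 := Nat.eq_zero_of_dvd_of_lt this (by omega)
    simp at hT0
  · have hNle := Nat.le_of_dvd hpos hN_dvd
    have hT₂two : Multiset.card T₂ = 2 := by omega
    obtain rfl : y = N - 2 := by omega
    obtain rfl : T₂ = {a, b} := Multiset.eq_of_le_of_card_le hT₂ (by simp [hT₂two])
    rw [sum_eq, Nat.sub_add_cancel hN, hNf, add_zero] at hTsum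
    have : n ∣ x + 1 := he ▸ addOrderOf_dvd_of_nsmul_eq_zero hTsum
    obtain rfl : x = n - 1 := by have := Nat.le_of_dvd (by omega) this; omega
    exact hTne rfl

end

theorem stmt6_general (n m : ℕ) (hn : 1 < n) (hm : 1 ≤ m) (i : ℕ)
    (e1 e2 : ZMod n × ZMod (m * n)) (he1 : e1 = (1, 0)) (he2 : e2 = (0, 1))
    (U : Multiset (ZMod n × ZMod (m * n)))
    (hU : U = Multiset.replicate (n - 1) e1 +
      {((-1 : ℤ) ^ (i + 1)) • e2 + ((i : ℤ) + 1) • e1,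
       ((-1 : ℤ) ^ (i + 1)) • e2 - (i : ℤ) • e1} +
      Multiset.replicate (m * n - 2) (((-1 : ℤ) ^ (i + 1)) • e2)) :
    IsMinZS (ZMod n × ZMod (m * n)) U ∧ Multiset.card U = m * n + n - 1 := by
  have hmn : 2 ≤ m * n := by nlinarith
  subst he1 he2 hU
  refine ⟨?_, by simp only [Multiset.card_add, Multiset.card_replicate, Multiset.card_pair]; omega⟩
  have hf : ((-1 : ℤ) ^ (i + 1)) • ((0, 1) : ZMod n × ZMod (m * n)) = (0, 1) ∨
      ((-1 : ℤ) ^ (i + 1)) • ((0, 1) : ZMod n × ZMod (m * n)) = (0, -1) := by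
    rcases neg_one_pow_eq_or ℤ (i + 1) with h | h <;> simp [h]
  apply isMinZS_replicate_add_pair_add_replicate (AddMonoidHom.snd _ _) (by omega) hmn
  case he => simp [Prod.addOrderOf_mk]
  case hab => module
  all_goals rcases hf with h | h <;> simp [h]

/-- In `G = C_n ⊕ C_{mn}` with basis `(e₁, e₂)`, for `i ∈ [0, n-1]` the sequence
`U_i = e₁^{n-1} · ((-1)^{i+1}e₂ + (i+1)e₁) · ((-1)^{i+1}e₂ - i e₁) · ((-1)^{i+1}e₂)^{mn-2}`
is a minimal zero-sum sequence of length `mn + n - 1 = D^*(G)`. -/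
theorem stmt6 (n m : ℕ) (hn : 1 < n) (hm : 1 ≤ m) (i : ℕ) (hi : i ≤ n - 1)
    (e1 e2 : ZMod n × ZMod (m * n)) (he1 : e1 = (1, 0)) (he2 : e2 = (0, 1))
    (U : Multiset (ZMod n × ZMod (m * n)))
    (hU : U = Multiset.replicate (n - 1) e1 +
      {((-1 : ℤ) ^ (i + 1)) • e2 + ((i : ℤ) + 1) • e1,
       ((-1 : ℤ) ^ (i + 1)) • e2 - (i : ℤ) • e1} +
      Multiset.replicate (m * n - 2) (((-1 : ℤ) ^ (i + 1)) • e2)) :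
    IsMinZS (ZMod n × ZMod (m * n)) U ∧ Multiset.card U = m * n + n - 1 :=
  stmt6_general n m hn hm i e1 e2 he1 he2 U hU
end

section
/- Let G = C_n ⊕ C_{mn} with basis (e_1, e_2), ord(e_1) = n > 1, ord(e_2) = mn. The sequence X = e_2^{mn−1} · (e_2 − e_1) · (−e_1)^{n−1} is a minimal zero-sum sequence over G of length mn + n − 1. -/
open scoped Pointwise

lemma decomp3 {α : Type*} [DecidableEq α] (T X : Multiset α) (x y z : α)
    (hxy : x ≠ y) (hxz : x ≠ z) (hyz : y ≠ z)
    (hT : T ≤ X) (hX : ∀ g, g ≠ x → g ≠ y → g ≠ z → X.count g = 0) :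
    T = Multiset.replicate (T.count x) x + Multiset.replicate (T.count y) y +
        Multiset.replicate (T.count z) z := by
  ext g
  simp only [Multiset.count_add, Multiset.count_replicate]
  by_cases h1 : g = x
  · subst h1; simp [Ne.symm hxy, Ne.symm hxz]
  by_cases h2 : g = y
  · subst h2; simp [hxy, Ne.symm hyz]
  by_cases h3 : g = z
  · subst h3; simp [hxz, hyz]
  · have := Multiset.count_le_of_le g hT
    rw [hX g h1 h2 h3] at this
    have h0 : T.count g = 0 := Nat.le_zero.mp this
    simp [Ne.symm h1, Ne.symm h2, Ne.symm h3, h0]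

lemma sumrep (n m a e b : ℕ) :
    (Multiset.replicate a ((0,1) : ZMod n × ZMod (m*n)) +
     Multiset.replicate e (((0,1) : ZMod n × ZMod (m*n)) - (1,0)) +
     Multiset.replicate b (-((1,0) : ZMod n × ZMod (m*n)))).sum
    = (-((e + b : ℕ) : ZMod n), ((a + e : ℕ) : ZMod (m*n))) := by
  simp only [Multiset.sum_add, Multiset.sum_replicate, Prod.ext_iff]
  constructor <;> simp [nsmul_eq_mul] <;> push_cast <;> ring


/-- In `G = C_n ⊕ C_{mn}` with basis `(e₁, e₂)`, the sequence
`X = e₂^{mn-1} · (e₂ - e₁) · (-e₁)^{n-1}` is a minimal zero-sum sequence of length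
`mn + n - 1`. -/
theorem stmt7 (n m : ℕ) (hn : 1 < n) (hm : 1 ≤ m)
    (e1 e2 : ZMod n × ZMod (m * n)) (he1 : e1 = (1, 0)) (he2 : e2 = (0, 1))
    (X : Multiset (ZMod n × ZMod (m * n)))
    (hX : X = Multiset.replicate (m * n - 1) e2 + {e2 - e1} +
      Multiset.replicate (n - 1) (-e1)) :
    IsMinZS (ZMod n × ZMod (m * n)) X ∧ Multiset.card X = m * n + n - 1 := by
  subst he1 he2
  have hmn2 : 2 ≤ m * n := le_trans hn (Nat.le_mul_of_pos_left n hm)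
  haveI : NeZero n := ⟨by omega⟩
  haveI : NeZero (m * n) := ⟨by omega⟩
  haveI : Fact (1 < n) := ⟨hn⟩
  haveI : Fact (1 < m * n) := ⟨hmn2⟩
  set x : ZMod n × ZMod (m * n) := (0, 1) with hxdef
  set y : ZMod n × ZMod (m * n) := (0, 1) - (1, 0) with hydef
  set z : ZMod n × ZMod (m * n) := -(1, 0) with hzdef
  have hxy : x ≠ y := by
    intro h
    have := congrArg Prod.fst h
    simp [hxdef, hydef] at this
  have hxz : x ≠ z := by
    intro h
    have := congrArg Prod.snd h
    simp [hxdef, hzdef] at this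
  have hyz : y ≠ z := by
    intro h
    have := congrArg Prod.snd h
    simp [hydef, hzdef] at this
  -- counts in X
  have hcx : X.count x = m * n - 1 := by
    rw [hX]; simp [Multiset.count_replicate, Multiset.count_singleton, hxy, hxz, Ne.symm hxy, Ne.symm hxz]
  have hcy : X.count y = 1 := by
    rw [hX]; simp [Multiset.count_replicate, Multiset.count_singleton, hxy, hyz, Ne.symm hxy, Ne.symm hyz]
  have hcz : X.count z = n - 1 := by
    rw [hX]; simp [Multiset.count_replicate, Multiset.count_singleton, hxz, hyz, Ne.symm hxz, Ne.symm hyz]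
  have hXout : ∀ g, g ≠ x → g ≠ y → g ≠ z → X.count g = 0 := by
    intro g h1 h2 h3
    rw [hX]; simp [Multiset.count_replicate, Multiset.count_singleton, h1, h2, h3, Ne.symm h1, Ne.symm h2, Ne.symm h3]
  have hcard : Multiset.card X = m * n + n - 1 := by
    rw [hX]; simp; omega
  refine ⟨⟨?_, ?_, ?_⟩, hcard⟩
  · intro h
    rw [h] at hcard
    simp at hcard
    omega
  · rw [hX, show ({(0,1) - (1,0)} : Multiset (ZMod n × ZMod (m*n))) =
      Multiset.replicate 1 ((0,1) - (1,0)) from (Multiset.replicate_one _).symm, sumrep]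
    have h1 : (1 + (n - 1) : ℕ) = n := by omega
    have h2 : (m * n - 1 + 1 : ℕ) = m * n := by omega
    rw [h1, h2]
    simp [Prod.ext_iff, ZMod.natCast_self]
  · intro T hTle hT0 hTX hsum
    have hdecT := decomp3 T X x y z hxy hxz hyz hTle hXout
    set a := T.count x with hadef
    set e := T.count y with hedef
    set b := T.count z with hbdef
    have ha : a ≤ m * n - 1 := hcx ▸ Multiset.count_le_of_le x hTle
    have he : e ≤ 1 := hcy ▸ Multiset.count_le_of_le y hTle
    have hb : b ≤ n - 1 := hcz ▸ Multiset.count_le_of_le z hTle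
    rw [hdecT, hxdef, hydef, hzdef, sumrep] at hsum
    rw [Prod.ext_iff] at hsum
    obtain ⟨hs1, hs2⟩ := hsum
    simp only [Prod.fst_zero, Prod.snd_zero, neg_eq_zero] at hs1 hs2
    rw [ZMod.natCast_eq_zero_iff] at hs1 hs2
    have hEB : e + b = 0 ∨ e + b = n := by
      obtain ⟨k, hk⟩ := hs1
      rcases k with _ | k
      · left; omega
      · right
        have hle : n * (k + 1) ≤ n := by omega
        rw [Nat.mul_succ] at hle hk
        omega
    have hAE : a + e = 0 ∨ a + e = m * n := by
      obtain ⟨k, hk⟩ := hs2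
      rcases k with _ | k
      · left; omega
      · right
        have hle : m * n * (k + 1) ≤ m * n := by omega
        rw [Nat.mul_succ] at hle hk
        omega
    rcases hAE with hAE | hAE
    · rcases hEB with hEB | hEB
      · apply hT0
        rw [hdecT]
        have : a = 0 ∧ e = 0 ∧ b = 0 := by omega
        simp [this.1, this.2.1, this.2.2]
      · omega
    · rcases hEB with hEB | hEB
      · omega
      · have hvals : a = m * n - 1 ∧ e = 1 ∧ b = n - 1 := by omega
        apply hTX
        rw [hdecT, hvals.1, hvals.2.1, hvals.2.2, hX, Multiset.replicate_one]
end

section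
/- Let G be a finite abelian group and A ∈ B(G) a nice zero-sum sequence admitting a factorization into 2k+1 atoms each of length D*(G) as in the definition of nice. Then both 2k+1 and k·D*(G) + ⌊D*(G)/2⌋ belong to the set of lengths L(A); consequently ρ_{2k+1}(G) ≥ k·D*(G) + ⌊D*(G)/2⌋. -/
open scoped Pointwise

/-!
The atoms `U_i` give a factorization of length `2k+1`. For the long factorization, split `A`
into the chosen elements `g_i` (together with `h` when `D^*(G)` is even) and the rest: both
parts factor into atoms of length `2`, apart from the one atom of length `3` among the `g_i`
in the odd case, so counting elements with `|A| = (2k+1) D^*(G)` yields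
`k D^*(G) + ⌊D^*(G)/2⌋` atoms. Over a finite group every atom has length at most `|G|`, so
`U_{2k+1}(G)` is bounded and its supremum dominates this length.
-/

section Atoms

variable {G : Type*} [AddCommGroup G]

/-- Two equal prefix sums of a minimal zero-sum sequence would cut out a proper nonempty
zero-sum block, so the prefix sums are pairwise distinct. -/
theorem IsMinZS.card_le_natCard [Finite G] {S : Multiset G} (hS : IsMinZS G S) :
    Multiset.card S ≤ Nat.card G := by
  obtain ⟨-, -, hmin⟩ := hS
  obtain ⟨l, rfl⟩ : ∃ l : List G, (l : Multiset G) = S := ⟨S.toList, S.coe_toList⟩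
  suffices Function.Injective fun i : Fin l.length => (l.take i).sum by
    simpa using Nat.card_le_card_of_injective _ this
  intro i j hij
  by_contra hne
  wlog hlt : i < j generalizing i j
  · exact this hij.symm (Ne.symm hne) (lt_of_le_of_ne (not_lt.mp hlt) (Ne.symm hne))
  set T := (l.take j).drop i
  have hsplit : (l.take i).sum + T.sum = (l.take j).sum := by
    rw [← List.sum_take_add_sum_drop (l.take j) i, List.take_take,
      min_eq_left (Fin.le_iff_val_le_val.mp hlt.le)]
  have hlen : T.length = j - i := by simp only [T, List.length_drop, List.length_take]; omega
  have hTl : T.Sublist l := (List.drop_sublist _ _).trans (List.take_sublist _ _)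
  refine hmin T (Multiset.coe_le.mpr hTl.subperm) ?_ ?_ (by simpa [← hij] using hsplit)
  · rw [Ne, Multiset.coe_eq_zero, ← List.length_eq_zero_iff]
    omega
  · intro hT
    have hcard := congrArg Multiset.card hT
    simp only [Multiset.coe_card] at hcard
    omega

theorem IsProdOfAtoms.le_card {m : ℕ} {S : Multiset G} (h : IsProdOfAtoms G m S) :
    m ≤ Multiset.card S := by
  obtain ⟨L, rfl, hL, rfl⟩ := h
  rw [show Multiset.card L.sum = (L.map Multiset.card).sum from Multiset.card_join L]
  simpa using
    Multiset.card_nsmul_le_sum (s := L.map Multiset.card) (a := 1)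
      (Multiset.forall_mem_map_iff.mpr fun U hU => Multiset.card_pos.mpr (hL U hU).1)

theorem IsProdOfAtoms.card_le [Finite G] {m : ℕ} {S : Multiset G} (h : IsProdOfAtoms G m S) :
    Multiset.card S ≤ m * Nat.card G := by
  obtain ⟨L, rfl, hL, rfl⟩ := h
  rw [show Multiset.card L.sum = (L.map Multiset.card).sum from Multiset.card_join L]
  simpa using
    Multiset.sum_le_card_nsmul (L.map Multiset.card) (Nat.card G)
      (Multiset.forall_mem_map_iff.mpr fun U hU => (hL U hU).card_le_natCard)

theorem bddAbove_ukSet [Finite G] (k : ℕ) : BddAbove (UkSet G k) :=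
  ⟨k * Nat.card G, fun _ ⟨_, hk, hm⟩ => hm.le_card.trans hk.card_le⟩

theorem IsProdOfAtoms.add {a b : ℕ} {S T : Multiset G} (ha : IsProdOfAtoms G a S)
    (hb : IsProdOfAtoms G b T) : IsProdOfAtoms G (a + b) (S + T) := by
  obtain ⟨L, rfl, hL, rfl⟩ := ha
  obtain ⟨M, rfl, hM, rfl⟩ := hb
  refine ⟨L + M, Multiset.card_add L M, fun U hU => ?_, Multiset.sum_add L M⟩
  exact (Multiset.mem_add.mp hU).elim (hL U) (hM U)

theorem IsProdOfAtoms.of_tsub [DecidableEq G] {a b : ℕ} {S T : Multiset G} (hTS : T ≤ S)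
    (ha : IsProdOfAtoms G a (S - T)) (hb : IsProdOfAtoms G b T) : IsProdOfAtoms G (a + b) S := by
  simpa [tsub_add_cancel_of_le hTS] using ha.add hb

theorem isProdOfAtoms_sum {ι : Type*} [Fintype ι] (U : ι → Multiset G)
    (hU : ∀ i, IsMinZS G (U i)) : IsProdOfAtoms G (Fintype.card ι) (∑ i, U i) :=
  ⟨Finset.univ.val.map U, by simp, by simpa using hU, rfl⟩

theorem IsProd2Atoms.exists_isProdOfAtoms {S : Multiset G} (h : IsProd2Atoms G S) :
    ∃ m, 2 * m = Multiset.card S ∧ IsProdOfAtoms G m S := by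
  obtain ⟨L, hL, rfl⟩ := h
  refine ⟨Multiset.card L, ?_, L, rfl, fun U hU => (hL U hU).1, rfl⟩
  have hmap : L.map Multiset.card = L.map fun _ => 2 :=
    Multiset.map_congr rfl fun U hU => (hL U hU).2
  rw [show Multiset.card L.sum = (L.map Multiset.card).sum from Multiset.card_join L, hmap]
  simp [mul_comm]

end Atoms

section Nice

variable {G : Type*} [AddCommGroup G] [DecidableEq G] {d k : ℕ} {A : Multiset G}

theorem NiceWith.two_mul_add_one_mem_lSet (hA : NiceWith G d k A) : 2 * k + 1 ∈ LSet G A := by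
  obtain ⟨-, U, -, hU, rfl, -⟩ := hA
  simpa [LSet] using isProdOfAtoms_sum U fun i => (hU i).1

theorem NiceWith.mul_add_div_two_mem_lSet (hA : NiceWith G d k A) :
    k * d + d / 2 ∈ LSet G A := by
  show IsProdOfAtoms G _ A
  obtain ⟨-, U, g, hU, hUA, hgU, hcase⟩ := hA
  have hcardA : Multiset.card A = (2 * k + 1) * d := by
    simp [← hUA, Multiset.card_sum, fun i => (hU i).2]
  have hcardg : Multiset.card (∑ i, ({g i} : Multiset G)) = 2 * k + 1 := by
    simp [Multiset.card_sum]
  have hgA : ∑ i, ({g i} : Multiset G) ≤ A := by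
    rw [← hUA]
    exact Finset.sum_le_sum fun i _ => Multiset.singleton_le.mpr (hgU i)
  rcases hcase with
    ⟨⟨t, rfl⟩, hrest, W, hW, -, hWsum⟩ | ⟨⟨t, rfl⟩, h, hh, hrest, hgh⟩
  · obtain ⟨m, hm, hrest⟩ := hrest.exists_isProdOfAtoms
    have hg : IsProdOfAtoms G k (∑ i, ({g i} : Multiset G)) := by
      simpa [hWsum] using isProdOfAtoms_sum W hW
    have hcount := congrArg Multiset.card (tsub_add_cancel_of_le hgA)
    rw [Multiset.card_add, ← hm, hcardg, hcardA] at hcount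
    convert hrest.of_tsub hgA hg using 1
    ring_nf at hcount ⊢
    omega
  · have hghA : ∑ i, ({g i} : Multiset G) + {h} ≤ A :=
      (add_le_add le_rfl (Multiset.singleton_le.mpr hh)).trans_eq (add_tsub_cancel_of_le hgA)
    obtain ⟨m, hm, hrest⟩ := hrest.exists_isProdOfAtoms
    obtain ⟨m', hm', hgh⟩ := hgh.exists_isProdOfAtoms
    have hcount := congrArg Multiset.card (tsub_add_cancel_of_le hghA)
    rw [Multiset.card_add, ← hm, ← hm', hcardA] at hcount
    rw [Multiset.card_add, hcardg, Multiset.card_singleton] at hm'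
    convert hrest.of_tsub hghA hgh using 1
    ring_nf at hcount ⊢
    omega

end Nice

theorem stmt10_general (G : Type*) [AddCommGroup G] [DecidableEq G] (r : ℕ) (n : Fin r → ℕ)
    (h1 : ∀ i, 1 < n i)
    (e : G ≃+ ((i : Fin r) → ZMod (n i)))
    (d : ℕ)
    (k : ℕ) (A : Multiset G) (hA : NiceWith G d k A) :
    (2 * k + 1) ∈ LSet G A ∧ (k * d + d / 2) ∈ LSet G A ∧
      k * d + d / 2 ≤ rho G (2 * k + 1) := by
  have : ∀ i, NeZero (n i) := fun i => ⟨(zero_lt_one.trans (h1 i)).ne'⟩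
  have : Finite G := .of_equiv _ e.symm.toEquiv
  have hshort := hA.two_mul_add_one_mem_lSet
  have hlong := hA.mul_add_div_two_mem_lSet
  exact ⟨hshort, hlong, le_csSup (bddAbove_ukSet _) ⟨A, hshort, hlong⟩⟩

/-- If `A ∈ B(G)` is nice with a factorization into `2k+1` atoms of length
`D^*(G)`, then `2k+1` and `k·D^*(G) + ⌊D^*(G)/2⌋` belong to `L(A)`; consequently
`ρ_{2k+1}(G) ≥ k·D^*(G) + ⌊D^*(G)/2⌋`. -/
theorem stmt10 (G : Type*) [AddCommGroup G] [DecidableEq G] (r : ℕ) (n : Fin r → ℕ)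
    (h1 : ∀ i, 1 < n i) (hdvd : ∀ i j : Fin r, i ≤ j → n i ∣ n j)
    (e : G ≃+ ((i : Fin r) → ZMod (n i)))
    (d : ℕ) (hd : d = 1 + ∑ i, (n i - 1))
    (k : ℕ) (A : Multiset G) (hA : NiceWith G d k A) :
    (2 * k + 1) ∈ LSet G A ∧ (k * d + d / 2) ∈ LSet G A ∧
      k * d + d / 2 ≤ rho G (2 * k + 1) :=
  stmt10_general G r n h1 e d k A hA
end

section
/- Let G be a finite abelian group with D*(G) even. If E is a pair-nice zero-sum sequence over G, X_1 is an atom of length D*(G), and E·X_1 is a product of atoms of length 2, then E·X_1 is nice. -/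
open scoped Pointwise

/-! The factorization `E = U_1 ⋯ U_{2k}` is extended by `U_{2k+1} = X_1`, with `g_{2k+1} = a` any
element of `X_1` and `g_{2k+2} = -a`. A sequence is a product of atoms of length `2` exactly
when it avoids `0`, every `x` occurs as often as `-x`, and elements of order `2` occur an even
number of times. This condition survives taking differences, so `-a` is still left in `E·X_1`
after removing `g_1 ⋯ g_{2k} a`, and both `g_1 ⋯ g_{2k+2}` and its complement are products of
atoms of length `2`. -/

section ProductsOfPairs

variable {G : Type*} [AddCommGroup G]

lemma isMinZS_pair {x : G} (hx : x ≠ 0) : IsMinZS G ({x, -x} : Multiset G) := by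
  refine ⟨by simp, by simp, fun T hle hT0 hTne => ?_⟩
  have hcard : Multiset.card T < 2 := by
    simpa using Multiset.card_lt_card (lt_of_le_of_ne hle hTne)
  obtain ⟨y, rfl⟩ : ∃ y, T = {y} := Multiset.card_eq_one.mp (by
    have := Multiset.card_pos.mpr hT0
    omega)
  have hy : y = x ∨ y = -x := by simpa using Multiset.singleton_le.mp hle
  rcases hy with rfl | rfl <;> simpa using hx

lemma IsMinZS.eq_pair_of_card_eq_two {U : Multiset G} (hU : IsMinZS G U)
    (hc : Multiset.card U = 2) : ∃ x : G, x ≠ 0 ∧ U = {x, -x} := by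
  obtain ⟨a, b, rfl⟩ := Multiset.card_eq_two.mp hc
  have hb : b = -a := eq_neg_of_add_eq_zero_right (by simpa using hU.2.1)
  refine ⟨a, fun ha0 => ?_, by rw [hb]⟩
  exact hU.2.2 {a} (by simp) (by simp) (by simp) (by simpa using ha0)

variable [DecidableEq G]

def IsBalanced (S : Multiset G) : Prop :=
  (0 : G) ∉ S ∧ (∀ x : G, S.count x = S.count (-x)) ∧
    ∀ x : G, x + x = 0 → Even (S.count x)

lemma isBalanced_zero : IsBalanced (0 : Multiset G) := ⟨by simp, by simp, by simp⟩

lemma IsBalanced.add {S T : Multiset G} (hS : IsBalanced S) (hT : IsBalanced T) :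
    IsBalanced (S + T) := by
  refine ⟨?_, fun x => ?_, fun x hx => ?_⟩
  · simpa only [Multiset.mem_add, not_or] using ⟨hS.1, hT.1⟩
  · simp [Multiset.count_add, hS.2.1 x, hT.2.1 x]
  · simpa [Multiset.count_add] using (hS.2.2 x hx).add (hT.2.2 x hx)

lemma IsBalanced.sub {S T : Multiset G} (hS : IsBalanced S) (hT : IsBalanced T) (hle : T ≤ S) :
    IsBalanced (S - T) := by
  refine ⟨fun h0 => hS.1 (Multiset.mem_of_le (Multiset.sub_le_self S T) h0),
    fun x => ?_, fun x hx => ?_⟩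
  · rw [Multiset.count_sub, Multiset.count_sub, hS.2.1 x, hT.2.1 x]
  · have hSx := hS.2.2 x hx
    have hTx := hT.2.2 x hx
    have hTS := Multiset.count_le_of_le x hle
    rw [Multiset.count_sub]
    rw [Nat.even_iff] at *
    omega

lemma count_pair_neg (x y : G) :
    ({x, -x} : Multiset G).count y = (if y = x then 1 else 0) + (if y = -x then 1 else 0) := by
  rw [Multiset.insert_eq_cons, Multiset.count_cons, Multiset.count_singleton, add_comm]

lemma isBalanced_pair {x : G} (hx : x ≠ 0) : IsBalanced ({x, -x} : Multiset G) := by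
  refine ⟨?_, fun y => ?_, fun y hy => ?_⟩
  · simpa [eq_comm, neg_eq_zero] using hx
  · rw [count_pair_neg, count_pair_neg, add_comm]
    simp only [neg_eq_iff_eq_neg, neg_neg]
  · have hyy : y = -y := eq_neg_of_add_eq_zero_left hy
    rw [count_pair_neg]
    by_cases hyx : y = x
    · subst hyx
      simp [← hyy]
    · have hyx' : y ≠ -x := fun h => hyx (by rw [hyy, h, neg_neg])
      simp [hyx, hyx']

lemma IsBalanced.pair_le {S : Multiset G} (hS : IsBalanced S) {a : G} (ha : a ∈ S) :
    ({a, -a} : Multiset G) ≤ S := by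
  have hpos : 0 < S.count a := Multiset.count_pos.mpr ha
  rw [Multiset.le_iff_count]
  intro y
  rw [count_pair_neg]
  by_cases hya : y = a
  · subst hya
    by_cases hneg : y = -y
    · obtain ⟨m, hm⟩ := hS.2.2 y (add_eq_zero_iff_eq_neg.mpr hneg)
      simp only [if_pos hneg, ↓reduceIte]
      omega
    · simp only [if_neg hneg, ↓reduceIte]
      omega
  · by_cases hyn : y = -a
    · subst hyn
      have := hS.2.1 a
      simp only [if_neg hya, ↓reduceIte]
      omega
    · simp [hya, hyn]

lemma IsProd2Atoms.isBalanced {S : Multiset G} (h : IsProd2Atoms G S) : IsBalanced S := by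
  obtain ⟨L, hL, rfl⟩ := h
  induction L using Multiset.induction with
  | empty => exact isBalanced_zero
  | cons U L ih =>
    rw [Multiset.sum_cons]
    obtain ⟨hU, hUcard⟩ := hL U (Multiset.mem_cons_self U L)
    obtain ⟨x, hx, rfl⟩ := hU.eq_pair_of_card_eq_two hUcard
    exact (isBalanced_pair hx).add (ih fun V hV => hL V (Multiset.mem_cons_of_mem hV))

lemma IsBalanced.isProd2Atoms {S : Multiset G} (h : IsBalanced S) : IsProd2Atoms G S := by
  induction S using Multiset.strongInductionOn with
  | _ S ih =>
    obtain rfl | ⟨a, ha⟩ := Multiset.empty_or_exists_mem S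
    · exact ⟨0, by simp, by simp⟩
    have ha0 : a ≠ 0 := fun h0 => h.1 (h0 ▸ ha)
    have hle := h.pair_le ha
    have hlt : S - {a, -a} < S := by
      refine lt_of_le_of_ne (Multiset.sub_le_self _ _) fun heq => ?_
      have hcard := congrArg Multiset.card heq
      have h2 := Multiset.card_le_card hle
      rw [Multiset.card_sub hle] at hcard
      simp only [Multiset.insert_eq_cons, Multiset.card_cons, Multiset.card_singleton] at hcard h2
      omega
    obtain ⟨L, hL, hLsum⟩ := ih _ hlt (h.sub (isBalanced_pair ha0) hle)
    refine ⟨{a, -a} ::ₘ L, fun U hU => ?_, ?_⟩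
    · rcases Multiset.mem_cons.mp hU with rfl | hU
      · exact ⟨isMinZS_pair ha0, by simp⟩
      · exact hL U hU
    · rw [Multiset.sum_cons, hLsum, add_tsub_cancel_of_le hle]

lemma IsBalanced.add_singleton_neg_le {S T : Multiset G} (hS : IsBalanced S) (hT : IsBalanced T)
    {a : G} (h : T + {a} ≤ S) : T + {a} + {-a} ≤ S := by
  rw [Multiset.le_iff_count]
  intro x
  have hx := Multiset.count_le_of_le x h
  simp only [Multiset.count_add, Multiset.count_singleton] at hx ⊢
  by_cases hxa : x = -a
  · subst hxa
    have ha := Multiset.count_le_of_le a h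
    simp only [Multiset.count_add, Multiset.count_singleton, ↓reduceIte] at ha hx ⊢
    by_cases haa : -a = a
    · have hSa := hS.2.2 a (add_eq_zero_iff_eq_neg.mpr haa.symm)
      have hTa := hT.2.2 a (add_eq_zero_iff_eq_neg.mpr haa.symm)
      rw [haa, Nat.even_iff] at *
      simp only [↓reduceIte] at *
      omega
    · have := hS.2.1 a
      have := hT.2.1 a
      simp only [if_neg haa] at hx ⊢
      omega
  · simpa [hxa] using hx

theorem IsProd2Atoms.split_add_singleton {S T : Multiset G} (hS : IsProd2Atoms G S)
    (hT : IsProd2Atoms G T) {a : G} (h : T + {a} ≤ S) :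
    -a ∈ S - (T + {a}) ∧ IsProd2Atoms G (S - (T + {a} + {-a})) ∧
      IsProd2Atoms G (T + {a} + {-a}) := by
  replace hS := hS.isBalanced
  replace hT := hT.isBalanced
  have hle := hS.add_singleton_neg_le hT h
  have ha0 : a ≠ 0 := fun ha => hS.1 (Multiset.mem_of_le h (by simp [ha]))
  have hTa : IsBalanced (T + {a} + {-a}) := by
    rw [add_assoc, Multiset.singleton_add, ← Multiset.insert_eq_cons]
    exact hT.add (isBalanced_pair ha0)
  exact ⟨Multiset.singleton_le.mp (le_tsub_of_add_le_left hle), (hS.sub hTa hle).isProd2Atoms,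
    hTa.isProd2Atoms⟩

end ProductsOfPairs

theorem stmt12_general (G : Type*) [AddCommGroup G] [DecidableEq G]
    (d : ℕ) (hdeven : Even d)
    (E X1 : Multiset G) (hE : PairNice G d E)
    (hX1 : IsMinZS G X1 ∧ Multiset.card X1 = d)
    (hprod : IsProd2Atoms G (E + X1)) :
    Nice G d (E + X1) := by
  obtain ⟨k, hk, U, g, hU, rfl, hg, hg2⟩ := hE
  obtain ⟨a, ha⟩ := Multiset.exists_mem_of_ne_zero hX1.1.1
  have hle : (∑ i, ({g i} : Multiset G)) + {a} ≤ (∑ i, U i) + X1 :=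
    add_le_add (Finset.sum_le_sum fun i _ => Multiset.singleton_le.mpr (hg i))
      (Multiset.singleton_le.mpr ha)
  refine ⟨k, hk, Fin.snoc U X1, Fin.snoc g a,
    Fin.forall_fin_succ'.mpr ⟨by simpa using hU, by simpa using hX1⟩,
    by simp [Fin.sum_univ_castSucc],
    Fin.forall_fin_succ'.mpr ⟨by simpa using hg, by simpa using ha⟩, Or.inr ⟨hdeven, -a, ?_⟩⟩
  simpa [Fin.sum_univ_castSucc] using hprod.split_add_singleton hg2 hle

/-- If `D^*(G)` is even, `E` is pair-nice, `X₁` is an atom of length `D^*(G)`,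
and `E·X₁` is a product of atoms of length `2`, then `E·X₁` is nice. -/
theorem stmt12 (G : Type*) [AddCommGroup G] [DecidableEq G] (r : ℕ) (n : Fin r → ℕ)
    (h1 : ∀ i, 1 < n i) (hdvd : ∀ i j : Fin r, i ≤ j → n i ∣ n j)
    (e : G ≃+ ((i : Fin r) → ZMod (n i)))
    (d : ℕ) (hd : d = 1 + ∑ i, (n i - 1)) (hdeven : Even d)
    (E X1 : Multiset G) (hE : PairNice G d E)
    (hX1 : IsMinZS G X1 ∧ Multiset.card X1 = d)
    (hprod : IsProd2Atoms G (E + X1)) :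
    Nice G d (E + X1) :=
  stmt12_general G d hdeven E X1 hE hX1 hprod
end

section
/- Let G be a finite abelian group with D*(G) odd. Suppose E is a pair-nice zero-sum sequence, X_1, X_2, X_3 are atoms of length D*(G), and there exist a_i ∈ supp(X_i), i = 1,2,3, such that a_1 a_2 a_3 is an atom and E·X_1·X_2·X_3·(a_1 a_2 a_3)^{−1} is a product of length-2 atoms. Then E·X_1·X_2·X_3 is nice. -/
/-!
Append `X₁, X₂, X₃` to the `2k` atoms of `E` and `a₁, a₂, a₃` to the selected elements
`g₁, …, g_{2k}`: this gives `2(k+1)+1` atoms of length `D*(G)`. The new selection is the atom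
`a₁a₂a₃` times the `k` length-2 atoms factoring `g₁⋯g_{2k}`, and its cofactor is obtained from
the product of length-2 atoms `E·X₁X₂X₃·(a₁a₂a₃)⁻¹` by removing `g₁⋯g_{2k}`, itself a product
of length-2 atoms. Such a quotient is again a product of length-2 atoms.
-/

open scoped Pointwise

lemma Multiset.card_sum_of_forall_card_eq {α : Type*} {L : Multiset (Multiset α)} {n : ℕ}
    (hL : ∀ U ∈ L, Multiset.card U = n) :
    Multiset.card L.sum = n * Multiset.card L := by
  induction L using Multiset.induction with
  | empty => simp
  | cons U L ih =>
    rw [Multiset.sum_cons, Multiset.card_add, Multiset.card_cons,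
      hL U (Multiset.mem_cons_self U L), ih fun V hV => hL V (Multiset.mem_cons_of_mem hV)]
    ring

lemma Multiset.pair_neg_eq_of_mem {G : Type*} [InvolutiveNeg G] {x h : G}
    (hh : h ∈ ({x, -x} : Multiset G)) : ({x, -x} : Multiset G) = {h, -h} := by
  rcases Multiset.mem_cons.mp hh with rfl | hh
  · rfl
  · rw [Multiset.mem_singleton.mp hh, neg_neg, Multiset.pair_comm]

section ZeroSum

variable {G : Type*} [AddCommGroup G]

lemma IsMinZS.exists_eq_pair {U : Multiset G} (hU : IsMinZS G U) (hcard : Multiset.card U = 2) :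
    ∃ x : G, U = {x, -x} := by
  obtain ⟨x, y, rfl⟩ := Multiset.card_eq_two.mp hcard
  have hxy : x + y = 0 := by simpa using hU.2.1
  exact ⟨x, by rw [eq_neg_of_add_eq_zero_right hxy]⟩

namespace IsProd2Atoms

lemma exists_fin_family {S : Multiset G} (hS : IsProd2Atoms G S) {k : ℕ}
    (hcard : Multiset.card S = 2 * k) :
    ∃ W : Fin k → Multiset G, (∀ j, IsMinZS G (W j) ∧ Multiset.card (W j) = 2) ∧
      ∑ j, W j = S := by
  obtain ⟨L, hL, rfl⟩ := hS
  obtain ⟨l, rfl⟩ : ∃ l : List (Multiset G), (l : Multiset _) = L := ⟨L.toList, L.coe_toList⟩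
  have hk : l.length = k := by
    rw [Multiset.card_sum_of_forall_card_eq fun U hU => (hL U hU).2] at hcard
    simpa using hcard
  subst hk
  exact ⟨fun j => l[(j : ℕ)], fun j => hL _ (List.getElem_mem _),
    (Fin.sum_univ_getElem l).trans (Multiset.sum_coe l).symm⟩

lemma exists_fin_family_cons {S P : Multiset G} (hS : IsProd2Atoms G S) {k : ℕ}
    (hcard : Multiset.card S = 2 * k) (hP : IsMinZS G P) (hP3 : Multiset.card P = 3) :
    ∃ W : Fin (k + 1) → Multiset G, (∀ j, IsMinZS G (W j)) ∧
      (∀ j : Fin (k + 1), Multiset.card (W j) = if (j : ℕ) = 0 then 3 else 2) ∧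
      ∑ j, W j = P + S := by
  obtain ⟨W, hW, hWsum⟩ := hS.exists_fin_family hcard
  refine ⟨Fin.cons P W, Fin.cases hP fun j => (hW j).1,
    Fin.cases (by simpa using hP3) fun j => by simpa using (hW j).2, ?_⟩
  simp only [Fin.sum_univ_succ, Fin.cons_zero, Fin.cons_succ, hWsum]

variable [DecidableEq G]

/-- The length-2 atom containing `h` can only be `h (-h)`, so it can be split off. -/
lemma tsub_pair {B : Multiset G} (hB : IsProd2Atoms G B) {h : G} (hh : h ∈ B) :
    IsProd2Atoms G (B - {h, -h}) := by
  obtain ⟨L, hL, rfl⟩ := hB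
  obtain ⟨U, hUL, hhU⟩ := Multiset.mem_join.mp hh
  obtain ⟨x, rfl⟩ := (hL U hUL).1.exists_eq_pair (hL U hUL).2
  rw [Multiset.pair_neg_eq_of_mem hhU] at hUL
  refine ⟨L.erase {h, -h}, fun V hV => hL V (Multiset.mem_of_mem_erase hV), ?_⟩
  rw [← Multiset.sum_erase hUL, add_tsub_cancel_left]

lemma tsub {B C : Multiset G} (hB : IsProd2Atoms G B) (hC : IsProd2Atoms G C) (hCB : C ≤ B) :
    IsProd2Atoms G (B - C) := by
  obtain ⟨L, hL, rfl⟩ := hC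
  induction L using Multiset.induction with
  | empty => simpa using hB
  | cons U L ih =>
    have hUL := hL U (Multiset.mem_cons_self U L)
    obtain ⟨x, rfl⟩ := hUL.1.exists_eq_pair hUL.2
    rw [Multiset.sum_cons] at hCB ⊢
    have hle : ({x, -x} : Multiset G) ≤ B - L.sum := le_tsub_of_add_le_right hCB
    rw [tsub_add_eq_tsub_tsub_swap]
    exact tsub_pair (ih (fun V hV => hL V (Multiset.mem_cons_of_mem hV))
      ((Multiset.le_add_left _ _).trans hCB)) (Multiset.mem_of_le hle (by simp))

lemma tsub_add {A B C : Multiset G} (hA : IsProd2Atoms G (A - C)) (hB : IsProd2Atoms G B)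
    (hBC : B + C ≤ A) : IsProd2Atoms G (A - (B + C)) := by
  rw [tsub_add_eq_tsub_tsub_swap]
  exact hA.tsub hB (le_tsub_of_add_le_right hBC)

end IsProd2Atoms

end ZeroSum

theorem stmt13_general (G : Type*) [AddCommGroup G] [DecidableEq G]
    (d : ℕ) (hdodd : Odd d)
    (E X1 X2 X3 : Multiset G) (hE : PairNice G d E)
    (hX1 : IsMinZS G X1 ∧ Multiset.card X1 = d)
    (hX2 : IsMinZS G X2 ∧ Multiset.card X2 = d)
    (hX3 : IsMinZS G X3 ∧ Multiset.card X3 = d)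
    (a1 a2 a3 : G) (ha1 : a1 ∈ X1) (ha2 : a2 ∈ X2) (ha3 : a3 ∈ X3)
    (hatom : IsMinZS G ({a1, a2, a3} : Multiset G))
    (hprod : IsProd2Atoms G (E + X1 + X2 + X3 - ({a1, a2, a3} : Multiset G))) :
    Nice G d (E + X1 + X2 + X3) := by
  obtain ⟨k, -, U, g, hU, rfl, hgU, hg2⟩ := hE
  set P : Multiset G := {a1, a2, a3}
  let V : Fin (2 * k + 3) → Multiset G := Fin.append U ![X1, X2, X3]
  let a : Fin (2 * k + 3) → G := Fin.append g ![a1, a2, a3]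
  have hV : ∀ i, IsMinZS G (V i) ∧ Multiset.card (V i) = d :=
    (Fin.forall_fin_add _).2
      ⟨by simpa [V] using hU, by simp [V, Fin.forall_fin_succ, hX1, hX2, hX3]⟩
  have haV : ∀ i, a i ∈ V i :=
    (Fin.forall_fin_add _).2
      ⟨by simpa [a, V] using hgU, by simp [a, V, Fin.forall_fin_succ, ha1, ha2, ha3]⟩
  have hVsum : ∑ i, V i = (∑ i, U i) + X1 + X2 + X3 := by
    simp [V, Fin.sum_univ_add, Fin.sum_univ_three, add_assoc]
  have haP : ∑ i, ({a i} : Multiset G) = (∑ i, {g i}) + P := by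
    simp only [a, Fin.sum_univ_add, Fin.append_left, Fin.append_right, Fin.sum_univ_three]
    rfl
  have hle : (∑ i, ({g i} : Multiset G)) + P ≤ (∑ i, U i) + X1 + X2 + X3 := by
    have hP : P ≤ X1 + X2 + X3 := add_le_add (add_le_add (Multiset.singleton_le.2 ha1)
      (Multiset.singleton_le.2 ha2)) (Multiset.singleton_le.2 ha3)
    simpa only [add_assoc] using
      add_le_add (Finset.sum_le_sum fun i _ => Multiset.singleton_le.2 (hgU i)) hP
  have hrest : IsProd2Atoms G ((∑ i, U i) + X1 + X2 + X3 - ∑ i, {a i}) :=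
    haP ▸ hprod.tsub_add hg2 hle
  obtain ⟨W, hWatom, hWcard, hWsum⟩ :=
    hg2.exists_fin_family_cons (k := k) (by simp [Multiset.card_sum]) hatom (by simp [P])
  refine ⟨k + 1, by omega, V, a, hV, hVsum, haV,
    Or.inl ⟨hdodd, hrest, W, hWatom, hWcard, ?_⟩⟩
  exact hWsum.trans ((add_comm _ _).trans haP.symm)

/-- If `D^*(G)` is odd, `E` is pair-nice, `X₁, X₂, X₃` are atoms of length
`D^*(G)`, `a_i ∈ supp(X_i)` with `a₁a₂a₃` an atom and `E·X₁·X₂·X₃·(a₁a₂a₃)⁻¹` a product of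
length-2 atoms, then `E·X₁·X₂·X₃` is nice. -/
theorem stmt13 (G : Type*) [AddCommGroup G] [DecidableEq G] (r : ℕ) (n : Fin r → ℕ)
    (h1 : ∀ i, 1 < n i) (hdvd : ∀ i j : Fin r, i ≤ j → n i ∣ n j)
    (e : G ≃+ ((i : Fin r) → ZMod (n i)))
    (d : ℕ) (hd : d = 1 + ∑ i, (n i - 1)) (hdodd : Odd d)
    (E X1 X2 X3 : Multiset G) (hE : PairNice G d E)
    (hX1 : IsMinZS G X1 ∧ Multiset.card X1 = d)
    (hX2 : IsMinZS G X2 ∧ Multiset.card X2 = d)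
    (hX3 : IsMinZS G X3 ∧ Multiset.card X3 = d)
    (a1 a2 a3 : G) (ha1 : a1 ∈ X1) (ha2 : a2 ∈ X2) (ha3 : a3 ∈ X3)
    (hatom : IsMinZS G ({a1, a2, a3} : Multiset G))
    (hprod : IsProd2Atoms G (E + X1 + X2 + X3 - ({a1, a2, a3} : Multiset G))) :
    Nice G d (E + X1 + X2 + X3) :=
  stmt13_general G d hdodd E X1 X2 X3 hE hX1 hX2 hX3 a1 a2 a3 ha1 ha2 ha3 hatom hprod
end

section
/- Let G = C_n ⊕ C_{mn} with basis (e_1, e_2), ord(e_1) = n ≥ 2 even, ord(e_2) = mn. Define V_j = e_2^{mn−1}·((−1)^{j+1}e_1 + (j+1)e_2)·((−1)^{j+1}e_1 − j e_2)·((−1)^{j+1}e_1)^{n−2} for j ∈ [0, mn−1]. Then each V_j is an atom of length mn + n − 1, and the product E_2 = V_0···V_{mn−1} satisfies: E_2 · e_2^{−(mn−1)mn} is a product of atoms of length 2. -/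
open scoped Pointwise

/-!
Write `V_j = e₂ ^ (mn - 1) · W_j`. The `n` terms of `W_j` all have first coordinate the unit
`ε = ±1`, so a zero-sum subsequence of `V_j` contains either none of them or all of them; in
the first case it is a power `e₂ ^ a` with `a < mn`, hence empty, and in the second its
complement is such a power, hence empty. After all copies of `e₂` are removed from `E₂`, the term
`(ε_j, j + 1)` of `W_j` is the negative of the term `(ε_{j+1}, -(j + 1))` of `W_{j+1}`
(cyclically, since `mn` is even), and as the signs `ε_j` alternate, the remaining terms `±e₁`
occur equally often.
-/

open Multiset Finset

theorem Multiset.exists_le_le_of_le_add {α : Type*} [DecidableEq α] {T A B : Multiset α}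
    (h : T ≤ A + B) : ∃ A' ≤ A, ∃ B' ≤ B, T = A' + B' :=
  ⟨T - B, Multiset.sub_le_iff_le_add.2 h, T ∩ B, Multiset.inter_le_right,
    (Multiset.sub_add_inter T B).symm⟩

theorem Finset.sum_range_succ_eq_of_eq {M : Type*} [AddCommMonoid M] (f : ℕ → M) {N : ℕ}
    (h : f N = f 0) : ∑ j ∈ range N, f (j + 1) = ∑ j ∈ range N, f j := by
  cases N with
  | zero => simp
  | succ N => rw [sum_range_succ, sum_range_succ' f, h]

theorem Prod.fst_multiset_sum_of_forall_fst_eq {M M' : Type*} [AddCommMonoid M]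
    [AddCommMonoid M'] {W : Multiset (M × M')} {a : M} (hW : ∀ w ∈ W, w.1 = a) :
    W.sum.1 = card W • a := by
  have h := map_multiset_sum (AddMonoidHom.fst M M') W
  rw [AddMonoidHom.coe_fst] at h
  rw [h, Multiset.map_congr rfl hW, Multiset.map_const', Multiset.sum_replicate]

theorem AddSubmonoid.sum_range_two_mul_mem {M : Type*} [AddCommMonoid M] (S : AddSubmonoid M)
    (f : ℕ → M) (hf : ∀ q, f (2 * q) + f (2 * q + 1) ∈ S) (K : ℕ) :
    ∑ j ∈ range (2 * K), f j ∈ S := by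
  induction K with
  | zero => simp [S.zero_mem]
  | succ K ih =>
    rw [Nat.mul_succ, sum_range_succ, sum_range_succ, add_assoc]
    exact S.add_mem ih (hf K)

section ZeroSumSequences

variable {G : Type*} [AddCommGroup G]

theorem isMinZS_pair_neg {g : G} (hg : g ≠ 0) : IsMinZS G {g, -g} := by
  refine ⟨by simp, by simp, fun T hT hT0 hTne => ?_⟩
  have hlt : card T < 2 := by
    simpa using Multiset.card_lt_card (lt_of_le_of_ne hT hTne)
  obtain ⟨a, rfl⟩ : ∃ a, T = {a} :=
    Multiset.card_eq_one.1 (by have := Multiset.card_pos.2 hT0; omega)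
  have ha : a = g ∨ a = -g := by simpa using Multiset.singleton_le.1 hT
  rcases ha with rfl | rfl <;> simpa using hg

variable (G) in
def prod2Atoms : AddSubmonoid (Multiset G) where
  carrier := {S | IsProd2Atoms G S}
  zero_mem' := ⟨0, by simp, rfl⟩
  add_mem' := by
    rintro _ _ ⟨L, hL, rfl⟩ ⟨M, hM, rfl⟩
    exact ⟨L + M, fun U hU => (Multiset.mem_add.1 hU).elim (hL U) (hM U), Multiset.sum_add L M⟩

theorem pair_neg_mem_prod2Atoms {g : G} (hg : g ≠ 0) : {g, -g} ∈ prod2Atoms G :=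
  ⟨{{g, -g}}, fun U hU => by rw [Multiset.mem_singleton.1 hU]; exact ⟨isMinZS_pair_neg hg, rfl⟩,
    Multiset.sum_singleton _⟩

theorem replicate_add_replicate_neg_mem_prod2Atoms {g : G} (hg : g ≠ 0) (c : ℕ) :
    replicate c g + replicate c (-g) ∈ prod2Atoms G := by
  rw [← Multiset.nsmul_singleton, ← Multiset.nsmul_singleton, ← smul_add]
  exact nsmul_mem (pair_neg_mem_prod2Atoms hg) c

end ZeroSumSequences

section CyclicProduct

variable {n N : ℕ}

theorem nsmul_zero_one_eq_zero_iff {a : ℕ} (ha : a < N) :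
    a • ((0, 1) : ZMod n × ZMod N) = 0 ↔ a = 0 := by
  simp only [Prod.smul_mk, smul_zero, nsmul_eq_mul, mul_one, Prod.mk_eq_zero, true_and,
    ZMod.natCast_eq_zero_iff]
  exact ⟨fun h => Nat.eq_zero_of_dvd_of_lt h ha, fun h => h ▸ dvd_zero N⟩

theorem isMinZS_replicate_add [NeZero n] [NeZero N] {W : Multiset (ZMod n × ZMod N)}
    {ε : ZMod n} (hε : IsUnit ε) (hW : ∀ w ∈ W, w.1 = ε) (hcard : card W = n)
    (hsum : W.sum.2 = 1) :
    IsMinZS (ZMod n × ZMod N) (replicate (N - 1) (0, 1) + W) := by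
  have hN := NeZero.pos N
  have hVsum : (replicate (N - 1) ((0, 1) : ZMod n × ZMod N) + W).sum = 0 := by
    ext
    · simp [Prod.fst_multiset_sum_of_forall_fst_eq hW, hcard]
    · simp [hsum, Nat.cast_sub (Nat.one_le_of_lt hN)]
  refine ⟨?_, hVsum, fun T hT hT0 hTne hTsum => ?_⟩
  · have : W ≠ 0 := fun h => NeZero.ne n (by simp [← hcard, h])
    simp [this]
  obtain ⟨A, hA, W', hW', rfl⟩ := Multiset.exists_le_le_of_le_add hT
  obtain ⟨a, ha, rfl⟩ := Multiset.le_replicate_iff.1 hA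
  -- `T.sum.1 = card W' • ε`, so `W'` is either empty or all of `W`
  have hdvd : n ∣ card W' := by
    have h1 := congrArg Prod.fst hTsum
    rw [Multiset.sum_add, Multiset.sum_replicate, Prod.fst_add, Prod.smul_fst, smul_zero,
      zero_add, Prod.fst_multiset_sum_of_forall_fst_eq fun w hw => hW w (mem_of_le hW' hw),
      Prod.fst_zero, nsmul_eq_mul, hε.mul_left_eq_zero] at h1
    exact (ZMod.natCast_eq_zero_iff _ _).1 h1
  by_cases h0 : card W' = 0
  · obtain rfl := Multiset.card_eq_zero.1 h0
    rw [add_zero, Multiset.sum_replicate, nsmul_zero_one_eq_zero_iff (by omega)] at hTsum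
    simp [hTsum] at hT0
  · have hle := hcard ▸ Multiset.card_le_card hW'
    obtain rfl : W' = W := Multiset.eq_of_le_of_card_le hW'
      (hcard.trans (Nat.eq_of_dvd_of_lt_two_mul h0 hdvd (by omega)).symm).le
    have hsplit : replicate (N - 1) ((0, 1) : ZMod n × ZMod N) + W' =
        (replicate a (0, 1) + W') + replicate (N - 1 - a) (0, 1) := by
      rw [add_right_comm, ← Multiset.replicate_add, Nat.add_sub_of_le ha]
    rw [hsplit, Multiset.sum_add, hTsum, zero_add, Multiset.sum_replicate,
      nsmul_zero_one_eq_zero_iff (by omega)] at hVsum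
    exact hTne (by rw [hsplit, hVsum, Multiset.replicate_zero, add_zero])

-- The `W_j` of `V_j = e₂ ^ (N - 1) · W_j`, with the sign `(-1) ^ (j + 1)` taken in `ZMod n`.
def vTail (n N j : ℕ) : Multiset (ZMod n × ZMod N) :=
  {((-1) ^ (j + 1), (j + 1 : ZMod N)), ((-1) ^ (j + 1), -(j : ZMod N))} +
    replicate (n - 2) ((-1) ^ (j + 1), 0)

theorem card_vTail (hn : 2 ≤ n) (j : ℕ) : card (vTail n N j) = n := by
  simp only [vTail, insert_eq_cons, cons_add, Multiset.singleton_add, Multiset.card_cons,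
    card_replicate]
  omega

theorem isMinZS_replicate_add_vTail [NeZero N] (hn : 2 ≤ n) (j : ℕ) :
    IsMinZS (ZMod n × ZMod N) (replicate (N - 1) (0, 1) + vTail n N j) := by
  have : NeZero n := ⟨by omega⟩
  refine isMinZS_replicate_add ((isUnit_one.neg).pow (j + 1)) ?_ (card_vTail hn j) ?_
  · simp [vTail, or_imp, forall_and, Multiset.mem_replicate]
  · simp [vTail]

theorem sum_vTail_mem_prod2Atoms [Fact (1 < n)] (hN : Even N) :
    ∑ j ∈ range N, vTail n N j ∈ prod2Atoms (ZMod n × ZMod N) := by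
  set x : ℕ → ZMod n × ZMod N := fun j => ((-1) ^ (j + 1), (j + 1 : ZMod N))
  set y : ℕ → ZMod n × ZMod N := fun j => ((-1) ^ (j + 1), -(j : ZMod N))
  have hy : ∑ j ∈ range N, ({y j} : Multiset _) = ∑ j ∈ range N, {-x j} := by
    -- `y (j + 1) = -x j`, and `y N = y 0` because `N` is even
    rw [← Finset.sum_range_succ_eq_of_eq (fun j => ({y j} : Multiset _))]
    · congr! 2 with j
      simp [x, y, pow_succ]
    · simp [y, pow_succ, hN.neg_one_pow]
  have hsplit : ∑ j ∈ range N, vTail n N j =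
      ∑ j ∈ range N, {x j, -x j} + ∑ j ∈ range N, replicate (n - 2) ((-1) ^ (j + 1), 0) := by
    simp only [vTail, Finset.sum_add_distrib, Multiset.insert_eq_cons, ← Multiset.singleton_add]
    rw [hy]
  rw [hsplit]
  refine add_mem (sum_mem fun j _ => pair_neg_mem_prod2Atoms fun h => ?_) ?_
  · exact (isUnit_one.neg.pow (j + 1)).ne_zero (congrArg Prod.fst h)
  obtain ⟨K, rfl⟩ := hN
  rw [← two_mul]
  refine AddSubmonoid.sum_range_two_mul_mem _ _ (fun q => ?_) K
  have hodd : ((-1 : ZMod n) ^ (2 * q + 1), (0 : ZMod (2 * K))) = (-1, 0) := by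
    simp [pow_succ, pow_mul]
  have heven : ((-1 : ZMod n) ^ (2 * q + 1 + 1), (0 : ZMod (2 * K))) = -(-1, 0) := by
    simp [pow_succ, pow_mul]
  rw [hodd, heven]
  exact replicate_add_replicate_neg_mem_prod2Atoms (by simp) _

end CyclicProduct

/-- In `G = C_n ⊕ C_{mn}` with `n` even, the sequences
`V_j = e₂^{mn-1}·((-1)^{j+1}e₁+(j+1)e₂)·((-1)^{j+1}e₁-j e₂)·((-1)^{j+1}e₁)^{n-2}`,
`j ∈ [0, mn-1]`, are atoms of length `mn + n - 1`, and
`E₂ = V₀···V_{mn-1}` with all `(mn-1)·mn` copies of `e₂` removed is a product of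
atoms of length `2`. -/
theorem stmt17 (n m : ℕ) (hn : 1 < n) (hneven : Even n) (hm : 1 ≤ m)
    (e1 e2 : ZMod n × ZMod (m * n)) (he1 : e1 = (1, 0)) (he2 : e2 = (0, 1))
    (V : ℕ → Multiset (ZMod n × ZMod (m * n)))
    (hV : ∀ j : ℕ, V j = Multiset.replicate (m * n - 1) e2 +
      {((-1 : ℤ) ^ (j + 1)) • e1 + ((j : ℤ) + 1) • e2,
       ((-1 : ℤ) ^ (j + 1)) • e1 - (j : ℤ) • e2} +
      Multiset.replicate (n - 2) (((-1 : ℤ) ^ (j + 1)) • e1)) :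
    (∀ j < m * n, IsMinZS (ZMod n × ZMod (m * n)) (V j) ∧
      Multiset.card (V j) = m * n + n - 1) ∧
    IsProd2Atoms (ZMod n × ZMod (m * n))
      ((∑ j ∈ Finset.range (m * n), V j) -
        Multiset.replicate ((m * n - 1) * (m * n)) e2) := by
  subst he1 he2
  have : Fact (1 < n) := ⟨hn⟩
  have : NeZero (m * n) := ⟨by positivity⟩
  have hVj (j : ℕ) : V j = replicate (m * n - 1) (0, 1) + vTail n (m * n) j := by
    simp [hV, vTail, add_assoc, Prod.smul_mk, zsmul_eq_mul, sub_eq_add_neg]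
  refine ⟨fun j _ => ⟨hVj j ▸ isMinZS_replicate_add_vTail hn j, ?_⟩, ?_⟩
  · rw [hVj, Multiset.card_add, card_vTail hn, Multiset.card_replicate]
    have := NeZero.pos (m * n)
    omega
  · rw [Finset.sum_congr rfl fun j _ => hVj j, Finset.sum_add_distrib, Finset.sum_const,
      Finset.card_range, Multiset.nsmul_replicate, Nat.mul_comm (m * n), add_tsub_cancel_left]
    exact sum_vTail_mem_prod2Atoms (hneven.mul_left m)
end
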